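/- arXiv:0806.3222 — 2 statements merged into one kernel-verified Lean document; each statement's English description precedes it below -/
import Mathlib

section
/- Let $U, V$ be Hilbert spaces, $F: U \to V$ a bounded linear operator, $1 < q \le 2$, $\mathcal{R}_q(u) = \sum_i w_i|\langle\phi_i,u\rangle|^q$ with orthonormal basis $(\phi_i)$ and $w_i \ge w_{\min} > 0$, and let $u^\dagger$ with $\partial\mathcal{R}_q(u^\dagger) \in \operatorname{range}(F^*)$. Then there exist $\beta_1, \beta_2 > 0$ and $\rho > \mathcal{R}_q(u^\dagger)$ such that $\mathcal{R}_q(u) - \mathcal{R}_q(u^\dagger) \ge \beta_1\|u - u^\dagger\|^2 - \beta_2\|F(u) - F(u^\dagger)\|$ for all $u$ with $\mathcal{R}_q(u) < \rho$. -/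
/-!
On `[-M, M]` the function `x ↦ |x| ^ q` is strongly convex with modulus `q (q - 1) M ^ (q - 2)`:
its derivative `q |x| ^ (q - 2) x` minus that linear term is odd and, since `q ≤ 2`, monotone on
`[0, M]`. If `R u < ρ = R u† + w_min`, all coefficients of `u` and `u†` are bounded by
`M = (ρ / w_min) ^ (1 / q)`, so summing the coefficientwise inequality with Parseval's identity
bounds the Bregman distance `R u - R u† - ⟪ξ, u - u†⟫` below by `β₁ ‖u - u†‖ ^ 2`. The source
condition rewrites `⟪ξ, u - u†⟫` as `⟪η, F u - F u†⟫ ≥ -‖η‖ ‖F u - F u†‖`.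
-/

open scoped InnerProductSpace
open Set

theorem abs_rpow_sub_one_mul_sign (q s : ℝ) :
    |s| ^ (q - 1) * Real.sign s = |s| ^ (q - 2) * s := by
  have hq : q - 1 = q - 2 + 1 := by ring
  rcases lt_trichotomy s 0 with hs | rfl | hs
  · rw [Real.sign_of_neg hs, abs_of_neg hs, hq, Real.rpow_add_one (neg_ne_zero.2 hs.ne)]
    ring
  · simp
  · rw [Real.sign_of_pos hs, abs_of_pos hs, hq, Real.rpow_add_one hs.ne']
    ring

theorem monotoneOn_Icc_of_odd_of_monotoneOn_Icc_nonneg {G H : Type*} [AddCommGroup G]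
    [LinearOrder G] [IsOrderedAddMonoid G] [AddCommGroup H] [PartialOrder H]
    [IsOrderedAddMonoid H] {f : G → H} {a : G} (h₁ : ∀ x, f (-x) = -f x)
    (h₂ : MonotoneOn f (Icc 0 a)) : MonotoneOn f (Icc (-a) a) := by
  intro x hx y hy hxy
  have ha : 0 ≤ a := neg_le_self_iff.1 (hx.1.trans hx.2)
  have hneg : MonotoneOn f (Icc (-a) 0) := fun x hx y hy hxy => by
    refine neg_le_neg_iff.1 ?_
    rw [← h₁, ← h₁]
    exact h₂ ⟨neg_nonneg.2 hy.2, neg_le.1 hy.1⟩ ⟨neg_nonneg.2 hx.2, neg_le.1 hx.1⟩ (neg_le_neg hxy)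
  rw [← Icc_union_Icc_eq_Icc (neg_nonpos.2 ha) ha] at hx hy
  exact hneg.union_right h₂ (isGreatest_Icc (neg_nonpos.2 ha)) (isLeast_Icc ha) hx hy hxy

theorem mul_sub_le_sub_of_hasDerivAt_of_monotoneOn {I : Set ℝ} (hI : I.OrdConnected)
    {g g' : ℝ → ℝ} (hg : ∀ x, HasDerivAt g (g' x) x) (hmono : MonotoneOn g' I)
    {s t : ℝ} (hs : s ∈ I) (ht : t ∈ I) : g' s * (t - s) ≤ g t - g s := by
  have hcont : Continuous g := continuous_iff_continuousAt.2 fun x => (hg x).continuousAt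
  rcases lt_trichotomy s t with hst | rfl | hts
  · obtain ⟨x, hx, hslope⟩ := exists_hasDerivAt_eq_slope g g' hst hcont.continuousOn
      fun x _ => hg x
    have hgx : g' s ≤ g' x := hmono hs (hI.out hs ht (Ioo_subset_Icc_self hx)) hx.1.le
    rw [eq_div_iff (sub_ne_zero.2 hst.ne')] at hslope
    rw [← hslope]
    exact mul_le_mul_of_nonneg_right hgx (sub_nonneg.2 hst.le)
  · simp
  · obtain ⟨x, hx, hslope⟩ := exists_hasDerivAt_eq_slope g g' hts hcont.continuousOn
      fun x _ => hg x
    have hgx : g' x ≤ g' s := hmono (hI.out ht hs (Ioo_subset_Icc_self hx)) hs hx.2.le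
    rw [eq_div_iff (sub_ne_zero.2 hts.ne')] at hslope
    nlinarith

theorem monotoneOn_rpow_sub_mul_Icc {p M : ℝ} (hp0 : 0 < p) (hp1 : p ≤ 1) :
    MonotoneOn (fun x => x ^ p - p * M ^ (p - 1) * x) (Icc 0 M) := by
  have hderiv : ∀ x ∈ Ioo 0 M,
      HasDerivAt (fun x => x ^ p - p * M ^ (p - 1) * x) (p * x ^ (p - 1) - p * M ^ (p - 1)) x :=
    fun x hx => by
      simpa only [mul_one] using (Real.hasDerivAt_rpow_const (Or.inl hx.1.ne')).fun_sub
        ((hasDerivAt_id' x).const_mul (p * M ^ (p - 1)))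
  refine monotoneOn_of_deriv_nonneg (convex_Icc 0 M) ?_ ?_ ?_
  · exact (continuousOn_id.rpow_const fun x _ => Or.inr hp0.le).sub
      (continuousOn_const.mul continuousOn_id)
  · rw [interior_Icc]
    exact fun x hx => (hderiv x hx).differentiableAt.differentiableWithinAt
  · rw [interior_Icc]
    intro x hx
    rw [(hderiv x hx).deriv, sub_nonneg]
    exact mul_le_mul_of_nonneg_left (Real.rpow_le_rpow_of_nonpos hx.1 hx.2.le (by linarith)) hp0.le

theorem mul_sq_le_abs_rpow_sub_abs_rpow_sub {q M s t : ℝ} (hq1 : 1 < q) (hq2 : q ≤ 2)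
    (hs : |s| ≤ M) (ht : |t| ≤ M) :
    q * (q - 1) * M ^ (q - 2) / 2 * (t - s) ^ 2 ≤
      |t| ^ q - |s| ^ q - q * |s| ^ (q - 2) * s * (t - s) := by
  set c := q * (q - 1) * M ^ (q - 2)
  set g : ℝ → ℝ := fun x => |x| ^ q - c / 2 * x ^ 2
  set g' : ℝ → ℝ := fun x => q * |x| ^ (q - 2) * x - c * x
  have hg : ∀ x, HasDerivAt g (g' x) x := fun x =>
    ((hasDerivAt_abs_rpow x hq1).fun_sub ((hasDerivAt_pow 2 x).const_mul (c / 2))).congr_deriv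
      (by simp only [g']; ring)
  have hg'_mono_nonneg : MonotoneOn g' (Icc 0 M) := by
    have hexp : q - 1 - 1 = q - 2 := by ring
    have hmono := (monotone_mul_left_of_nonneg (by linarith : 0 ≤ q)).comp_monotoneOn
      (monotoneOn_rpow_sub_mul_Icc (M := M) (by linarith : 0 < q - 1) (by linarith : q - 1 ≤ 1))
    refine hmono.congr fun x hx => ?_
    have hpow : x ^ (q - 1) = x ^ (q - 2) * x := by
      rw [← Real.rpow_add_one' hx.1 (by linarith)]
      ring_nf
    simp only [Function.comp, g', c, abs_of_nonneg hx.1, hexp, hpow]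
    ring
  have hg'_odd : ∀ x, g' (-x) = -g' x := fun x => by
    simp only [g', abs_neg]
    ring
  have htangent := mul_sub_le_sub_of_hasDerivAt_of_monotoneOn ordConnected_Icc hg
    (monotoneOn_Icc_of_odd_of_monotoneOn_Icc_nonneg hg'_odd hg'_mono_nonneg)
    (abs_le.1 hs) (abs_le.1 ht)
  simp only [g, g'] at htangent
  linarith

theorem abs_le_rpow_inv_of_tsum_le {ι : Type*} {w x : ι → ℝ} {wmin q r : ℝ} (hq : 0 < q)
    (hwmin : 0 < wmin) (hw : ∀ i, wmin ≤ w i) (hs : Summable fun i => w i * |x i| ^ q)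
    (hr : ∑' i, w i * |x i| ^ q ≤ r) (i : ι) : |x i| ≤ (r / wmin) ^ q⁻¹ := by
  have hi : wmin * |x i| ^ q ≤ r :=
    calc wmin * |x i| ^ q ≤ w i * |x i| ^ q := mul_le_mul_of_nonneg_right (hw i) (by positivity)
      _ ≤ ∑' j, w j * |x j| ^ q :=
        hs.le_tsum i fun j _ => mul_nonneg (hwmin.le.trans (hw j)) (by positivity)
      _ ≤ r := hr
  have hr0 : 0 ≤ r := (by positivity : 0 ≤ wmin * |x i| ^ q).trans hi
  rw [Real.le_rpow_inv_iff_of_pos (abs_nonneg _) (div_nonneg hr0 hwmin.le) hq,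
    le_div_iff₀' hwmin]
  exact hi

namespace HilbertBasis

variable {ι U : Type*} [NormedAddCommGroup U] [InnerProductSpace ℝ U] (b : HilbertBasis ι ℝ U)

theorem hasSum_inner_sq (x : U) : HasSum (fun i => ⟪b i, x⟫_ℝ ^ 2) (‖x‖ ^ 2) := by
  simpa only [real_inner_comm x, ← sq, real_inner_self_eq_norm_sq] using
    b.hasSum_inner_mul_inner x x

theorem mul_norm_sub_sq_le_of_hasSum_abs_rpow {q M wmin Ru Rv : ℝ} {w : ι → ℝ}
    (hq1 : 1 < q) (hq2 : q ≤ 2) (hwmin : 0 ≤ wmin) (hw : ∀ i, wmin ≤ w i) {u v ξ : U}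
    (hu : HasSum (fun i => w i * |⟪b i, u⟫_ℝ| ^ q) Ru)
    (hv : HasSum (fun i => w i * |⟪b i, v⟫_ℝ| ^ q) Rv)
    (huM : ∀ i, |⟪b i, u⟫_ℝ| ≤ M) (hvM : ∀ i, |⟪b i, v⟫_ℝ| ≤ M)
    (hξ : ∀ i, ⟪b i, ξ⟫_ℝ = q * w i * |⟪b i, v⟫_ℝ| ^ (q - 1) * Real.sign ⟪b i, v⟫_ℝ) :
    wmin * (q * (q - 1) * M ^ (q - 2) / 2) * ‖u - v‖ ^ 2 ≤ Ru - Rv - ⟪ξ, u - v⟫_ℝ := by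
  set c := q * (q - 1) * M ^ (q - 2) / 2
  have hterm : ∀ i, wmin * c * ⟪b i, u - v⟫_ℝ ^ 2 ≤
      w i * |⟪b i, u⟫_ℝ| ^ q - w i * |⟪b i, v⟫_ℝ| ^ q - ⟪ξ, b i⟫_ℝ * ⟪b i, u - v⟫_ℝ := by
    intro i
    rw [real_inner_comm (b i) ξ, hξ i, inner_sub_right]
    set s := ⟪b i, v⟫_ℝ
    set t := ⟪b i, u⟫_ℝ
    have hc : 0 ≤ c * (t - s) ^ 2 := by
      have : 0 ≤ M := (abs_nonneg s).trans (hvM i)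
      have : 0 < q * (q - 1) := by nlinarith
      positivity
    have hsign := abs_rpow_sub_one_mul_sign q s
    calc wmin * c * (t - s) ^ 2 = wmin * (c * (t - s) ^ 2) := mul_assoc _ _ _
      _ ≤ w i * (|t| ^ q - |s| ^ q - q * |s| ^ (q - 2) * s * (t - s)) :=
        mul_le_mul (hw i) (mul_sq_le_abs_rpow_sub_abs_rpow_sub hq1 hq2 (hvM i) (huM i)) hc
          (hwmin.trans (hw i))
      _ = _ := by linear_combination (q * w i * (t - s)) * hsign
  exact hasSum_le hterm ((b.hasSum_inner_sq (u - v)).mul_left (wmin * c))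
    ((hu.sub hv).sub (b.hasSum_inner_mul_inner ξ (u - v)))

end HilbertBasis

theorem linear_source_implies_variational
    {U V : Type*} [NormedAddCommGroup U] [InnerProductSpace ℝ U] [CompleteSpace U]
    [NormedAddCommGroup V] [InnerProductSpace ℝ V] [CompleteSpace V]
    (F : U →L[ℝ] V) (b : HilbertBasis ℕ ℝ U)
    (q : ℝ) (hq1 : 1 < q) (hq2 : q ≤ 2)
    (w : ℕ → ℝ) (wmin : ℝ) (hwmin : 0 < wmin) (hw : ∀ i, wmin ≤ w i)
    (R : U → ℝ) (hR : ∀ u : U, R u = ∑' i, w i * |⟪b i, u⟫_ℝ| ^ q)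
    (udag : U) (hudag : Summable (fun i => w i * |⟪b i, udag⟫_ℝ| ^ q))
    (ξ : U)
    (hξ : ∀ i, ⟪b i, ξ⟫_ℝ = q * w i * |⟪b i, udag⟫_ℝ| ^ (q - 1) * Real.sign ⟪b i, udag⟫_ℝ)
    (η : V) (hsource : ξ = ContinuousLinearMap.adjoint F η) :
    ∃ β₁ > 0, ∃ β₂ > 0, ∃ ρ > R udag, ∀ u : U,
      Summable (fun i => w i * |⟪b i, u⟫_ℝ| ^ q) → R u < ρ →
      β₁ * ‖u - udag‖ ^ 2 - β₂ * ‖F u - F udag‖ ≤ R u - R udag := by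
  have hRudag : 0 ≤ R udag :=
    hR udag ▸ tsum_nonneg fun i => mul_nonneg (hwmin.le.trans (hw i)) (by positivity)
  set ρ := R udag + wmin
  set M := (ρ / wmin) ^ q⁻¹
  have hM : 0 < M := Real.rpow_pos_of_pos (div_pos (by positivity) hwmin) _
  have hcoeff : ∀ v, Summable (fun i => w i * |⟪b i, v⟫_ℝ| ^ q) → R v ≤ ρ →
      ∀ i, |⟪b i, v⟫_ℝ| ≤ M :=
    fun v hv hRv => abs_le_rpow_inv_of_tsum_le (by linarith) hwmin hw hv (hR v ▸ hRv)
  have hq : 0 < q * (q - 1) := by nlinarith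
  refine ⟨wmin * (q * (q - 1) * M ^ (q - 2) / 2), by positivity, ‖η‖ + 1, by positivity, ρ,
    by linarith, fun u hu hRu => ?_⟩
  have hbregman := b.mul_norm_sub_sq_le_of_hasSum_abs_rpow hq1 hq2 hwmin.le hw
    (hR u ▸ hu.hasSum) (hR udag ▸ hudag.hasSum) (hcoeff u hu hRu.le)
    (hcoeff udag hudag (by linarith)) hξ
  have hinner : -(‖η‖ * ‖F u - F udag‖) ≤ ⟪ξ, u - udag⟫_ℝ := by
    rw [hsource, ContinuousLinearMap.adjoint_inner_left, map_sub]
    exact neg_le_of_abs_le (abs_real_inner_le_norm _ _)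
  nlinarith [norm_nonneg (F u - F udag)]
end

section
/- Let $1 < q \le 2$, Hilbert space $U$ with orthonormal basis $(\phi_i)$, convex penalty $\mathcal{R}_q$ as above, $u^\dagger \in \operatorname{dom}(\partial\mathcal{R}_q)$, and suppose there exist $0 \le \gamma_1 < 1$, $\gamma_2 > 0$, $\rho > \mathcal{R}_q(u^\dagger)$ such that $\langle\partial\mathcal{R}_q(u^\dagger), u^\dagger - u\rangle \le \gamma_1 \mathcal{D}_B(u, u^\dagger) + \gamma_2\|F(u) - F(u^\dagger)\|$ for all $u$ with $\mathcal{R}_q(u) < \rho$, where $\mathcal{D}_B(u,u^\dagger) = \mathcal{R}_q(u) - \mathcal{R}_q(u^\dagger) - \langle\partial\mathcal{R}_q(u^\dagger), u - u^\dagger\rangle$. Then there exist $\beta_1, \beta_2 > 0$ such that $\mathcal{R}_q(u) - \mathcal{R}_q(u^\dagger) \ge \beta_1\|u-u^\dagger\|^2 - \beta_2\|F(u)-F(u^\dagger)\|$ for all such $u$; explicitly one may take $\beta_1 = \tilde\beta/(1+2\gamma_1)$ and $\beta_2 = \gamma_2/(1+2\gamma_1)$ with $\tilde\beta = (1-\gamma_1)c_q/(3w_{\min}+2\mathcal{R}_q(u^\dagger)+\rho)$.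 -/
/-!
On `[-M, M]` the function `|x| ^ q - κ x ^ 2` with `κ = q (q - 1) M ^ (q - 2) / 2` is convex: its
derivative is odd, and on `[0, M]` its derivative `q (q - 1) (x ^ (q - 2) - M ^ (q - 2))` is
nonnegative because `q ≤ 2`. The tangent-line inequality for it bounds the Bregman distance of
`|·| ^ q` from below by `κ (t - s) ^ 2`. Every coefficient of `u` with `R u < ρ` has modulus at most
`M = (ρ / wmin) ^ (1 / q)`, so summing over the Hilbert basis (Parseval) gives
`D_B(u, u†) ≥ wmin κ ‖u - u†‖ ^ 2`. Finally `R u - R u† = D_B(u, u†) + ⟪ξ, u - u†⟫`, and the source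
condition bounds `-⟪ξ, u - u†⟫` by `γ₁ D_B(u, u†) + γ₂ ‖F u - F u†‖`.
-/

open Real Set
open scoped InnerProductSpace

lemma ConvexOn.add_mul_sub_le_of_hasDerivAt {S : Set ℝ} {f : ℝ → ℝ} {x y f' : ℝ}
    (hf : ConvexOn ℝ S f) (hx : x ∈ S) (hy : y ∈ S) (hd : HasDerivAt f f' x) :
    f x + f' * (y - x) ≤ f y := by
  rcases lt_trichotomy x y with hxy | rfl | hyx
  · have := hf.le_slope_of_hasDerivAt hx hy hxy hd
    rw [slope_def_field, le_div_iff₀ (sub_pos.2 hxy)] at this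
    linarith
  · simp
  · have := hf.slope_le_of_hasDerivAt hy hx hyx hd
    rw [slope_def_field, div_le_iff₀ (sub_pos.2 hyx)] at this
    linarith

lemma monotoneOn_Icc_neg_of_odd {f : ℝ → ℝ} {M : ℝ} (hodd : ∀ x, f (-x) = -f x)
    (hmono : MonotoneOn f (Icc 0 M)) : MonotoneOn f (Icc (-M) M) := by
  rcases lt_or_ge M 0 with hM | hM
  · rw [Icc_eq_empty (by linarith : ¬ -M ≤ M)]
    exact fun _ hx => hx.elim
  have hneg : MonotoneOn f (Icc (-M) 0) := fun x hx y hy hxy => by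
    have := hmono (a := -y) (b := -x) ⟨by linarith [hy.2], by linarith [hy.1]⟩
      ⟨by linarith [hx.2], by linarith [hx.1]⟩ (neg_le_neg hxy)
    rw [hodd, hodd] at this
    exact neg_le_neg_iff.1 this
  rw [← Icc_union_Icc_eq_Icc (by linarith) hM]
  exact hneg.union_right hmono (isGreatest_Icc (by linarith)) (isLeast_Icc hM)

lemma hasDerivAt_abs_rpow_sign {q : ℝ} (hq : 1 < q) (x : ℝ) :
    HasDerivAt (fun y : ℝ => |y| ^ q) (q * |x| ^ (q - 1) * Real.sign x) x := by
  convert hasDerivAt_abs_rpow x hq using 1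
  rcases lt_trichotomy x 0 with hx | rfl | hx
  · rw [sign_of_neg hx, abs_of_neg hx, show q - 1 = (q - 2) + 1 by ring,
      rpow_add (by linarith) _ 1, rpow_one]
    ring
  · simp
  · rw [sign_of_pos hx, abs_of_pos hx, show q - 1 = (q - 2) + 1 by ring,
      rpow_add hx _ 1, rpow_one]
    ring

lemma monotoneOn_rpow_sub_mul {q M : ℝ} (hq1 : 1 < q) (hq2 : q ≤ 2) :
    MonotoneOn (fun x : ℝ => q * x ^ (q - 1) - q * (q - 1) * M ^ (q - 2) * x) (Icc 0 M) := by
  refine monotoneOn_of_hasDerivWithinAt_nonneg (convex_Icc 0 M)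
    (f' := fun x => q * ((q - 1) * x ^ (q - 2)) - q * (q - 1) * M ^ (q - 2)) ?_ ?_ ?_
  · exact ((continuousOn_id.rpow_const fun _ _ => Or.inr (by linarith)).const_smul q).sub
      (continuousOn_const.mul continuousOn_id)
  · intro x hx
    rw [interior_Icc] at hx
    have := ((hasDerivAt_rpow_const (p := q - 1) (Or.inl hx.1.ne')).const_mul q).sub
      ((hasDerivAt_id x).const_mul (q * (q - 1) * M ^ (q - 2)))
    rw [show q - 1 - 1 = q - 2 by ring, mul_one] at this
    exact this.hasDerivWithinAt
  · intro x hx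
    rw [interior_Icc] at hx
    have hpow : M ^ (q - 2) ≤ x ^ (q - 2) := rpow_le_rpow_of_nonpos hx.1 hx.2.le (by linarith)
    have := mul_le_mul_of_nonneg_left hpow
      (mul_nonneg (by linarith : 0 ≤ q) (by linarith : 0 ≤ q - 1))
    linarith

lemma hasDerivAt_abs_rpow_sub_mul_sq {q : ℝ} (hq : 1 < q) (κ x : ℝ) :
    HasDerivAt (fun y : ℝ => |y| ^ q - κ * y ^ 2)
      (q * |x| ^ (q - 1) * Real.sign x - 2 * κ * x) x := by
  refine ((hasDerivAt_abs_rpow_sign hq x).sub ((hasDerivAt_pow 2 x).const_mul κ)).congr_deriv ?_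
  push_cast
  ring

lemma convexOn_abs_rpow_sub_mul_sq {q : ℝ} (hq1 : 1 < q) (hq2 : q ≤ 2) (M : ℝ) :
    ConvexOn ℝ (Icc (-M) M) (fun x : ℝ => |x| ^ q - q * (q - 1) / 2 * M ^ (q - 2) * x ^ 2) := by
  set φ : ℝ → ℝ := fun x =>
    q * |x| ^ (q - 1) * Real.sign x - 2 * (q * (q - 1) / 2 * M ^ (q - 2)) * x
  have hderiv := hasDerivAt_abs_rpow_sub_mul_sq hq1 (q * (q - 1) / 2 * M ^ (q - 2))
  have hodd : ∀ x, φ (-x) = -φ x := fun x => by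
    simp only [φ, abs_neg, Real.sign_neg]
    ring
  have hφ_eqOn : EqOn (fun x : ℝ => q * x ^ (q - 1) - q * (q - 1) * M ^ (q - 2) * x) φ
      (Icc 0 M) := by
    intro x hx
    rcases hx.1.eq_or_lt with rfl | hx0
    · simp [φ, zero_rpow (by linarith : q - 1 ≠ 0)]
    · simp only [φ, abs_of_pos hx0, sign_of_pos hx0]
      ring
  have hmono : MonotoneOn φ (Icc (-M) M) :=
    monotoneOn_Icc_neg_of_odd hodd ((monotoneOn_rpow_sub_mul hq1 hq2).congr hφ_eqOn)
  refine MonotoneOn.convexOn_of_deriv (convex_Icc _ _)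
    (fun x _ => (hderiv x).continuousAt.continuousWithinAt)
    (fun x _ => (hderiv x).differentiableAt.differentiableWithinAt) ?_
  exact (hmono.mono interior_subset).congr fun x _ => ((hderiv x).deriv).symm

theorem abs_rpow_sub_sub_mul_ge {q M s t : ℝ} (hq1 : 1 < q) (hq2 : q ≤ 2)
    (hs : |s| ≤ M) (ht : |t| ≤ M) :
    q * (q - 1) / 2 * M ^ (q - 2) * (t - s) ^ 2 ≤
      |t| ^ q - |s| ^ q - q * |s| ^ (q - 1) * Real.sign s * (t - s) := by
  have := (convexOn_abs_rpow_sub_mul_sq hq1 hq2 M).add_mul_sub_le_of_hasDerivAt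
    (abs_le.1 hs) (abs_le.1 ht) (hasDerivAt_abs_rpow_sub_mul_sq hq1 _ s)
  linarith

lemma abs_le_rpow_inv_of_tsum_mul_abs_rpow_le {ι : Type*} {w c : ι → ℝ} {q wmin ρ : ℝ}
    (hq : 0 < q) (hwmin : 0 < wmin) (hw : ∀ i, wmin ≤ w i)
    (hs : Summable fun i => w i * |c i| ^ q) (hρ : ∑' i, w i * |c i| ^ q ≤ ρ) (i : ι) :
    |c i| ≤ (ρ / wmin) ^ q⁻¹ := by
  have hterm : wmin * |c i| ^ q ≤ ρ := calc
    wmin * |c i| ^ q ≤ w i * |c i| ^ q := by gcongr; exact hw i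
    _ ≤ ∑' j, w j * |c j| ^ q :=
      hs.le_tsum i fun j _ => mul_nonneg (hwmin.le.trans (hw j)) (by positivity)
    _ ≤ ρ := hρ
  rw [le_rpow_inv_iff_of_pos (abs_nonneg _) _ hq, le_div_iff₀' hwmin]
  · exact hterm
  · exact div_nonneg ((by positivity : 0 ≤ wmin * |c i| ^ q).trans hterm) hwmin.le

namespace HilbertBasis

variable {ι U : Type*} [NormedAddCommGroup U] [InnerProductSpace ℝ U] (b : HilbertBasis ι ℝ U)

lemma hasSum_inner_mul_inner_sub (ξ u v : U) :
    HasSum (fun i => ⟪b i, ξ⟫_ℝ * (⟪b i, u⟫_ℝ - ⟪b i, v⟫_ℝ)) ⟪ξ, u - v⟫_ℝ := by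
  simpa only [real_inner_comm ξ, inner_sub_right] using b.hasSum_inner_mul_inner ξ (u - v)

lemma hasSum_inner_sub_sq (u v : U) :
    HasSum (fun i => (⟪b i, u⟫_ℝ - ⟪b i, v⟫_ℝ) ^ 2) (‖u - v‖ ^ 2) := by
  have := b.hasSum_inner_mul_inner_sub (u - v) u v
  rw [real_inner_self_eq_norm_sq] at this
  simpa only [inner_sub_right, ← sq] using this

theorem mul_norm_sub_sq_le_tsum_sub_tsum_sub_inner {q M wmin : ℝ} {w : ι → ℝ}
    (hq1 : 1 < q) (hq2 : q ≤ 2) (hwmin : 0 ≤ wmin) (hw : ∀ i, wmin ≤ w i) {u v ξ : U}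
    (hu : Summable fun i => w i * |⟪b i, u⟫_ℝ| ^ q)
    (hv : Summable fun i => w i * |⟪b i, v⟫_ℝ| ^ q)
    (huM : ∀ i, |⟪b i, u⟫_ℝ| ≤ M) (hvM : ∀ i, |⟪b i, v⟫_ℝ| ≤ M)
    (hξ : ∀ i, ⟪b i, ξ⟫_ℝ = q * w i * |⟪b i, v⟫_ℝ| ^ (q - 1) * Real.sign ⟪b i, v⟫_ℝ) :
    wmin * (q * (q - 1) / 2 * M ^ (q - 2)) * ‖u - v‖ ^ 2 ≤
      ∑' i, w i * |⟪b i, u⟫_ℝ| ^ q - ∑' i, w i * |⟪b i, v⟫_ℝ| ^ q - ⟪ξ, u - v⟫_ℝ := by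
  refine hasSum_le (fun i => ?_) ((b.hasSum_inner_sub_sq u v).mul_left _)
    ((hu.hasSum.sub hv.hasSum).sub (b.hasSum_inner_mul_inner_sub ξ u v))
  have hκ : 0 ≤ q * (q - 1) / 2 * M ^ (q - 2) := by
    have := sub_pos.2 hq1
    have := (abs_nonneg _).trans (huM i)
    positivity
  calc wmin * (q * (q - 1) / 2 * M ^ (q - 2)) * (⟪b i, u⟫_ℝ - ⟪b i, v⟫_ℝ) ^ 2
      ≤ w i * (q * (q - 1) / 2 * M ^ (q - 2) * (⟪b i, u⟫_ℝ - ⟪b i, v⟫_ℝ) ^ 2) := by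
        rw [mul_assoc]; gcongr; exact hw i
    _ ≤ w i * (|⟪b i, u⟫_ℝ| ^ q - |⟪b i, v⟫_ℝ| ^ q -
          q * |⟪b i, v⟫_ℝ| ^ (q - 1) * Real.sign ⟪b i, v⟫_ℝ * (⟪b i, u⟫_ℝ - ⟪b i, v⟫_ℝ)) :=
        mul_le_mul_of_nonneg_left (abs_rpow_sub_sub_mul_ge hq1 hq2 (hvM i) (huM i))
          (hwmin.trans (hw i))
    _ = _ := by rw [hξ]; ring

end HilbertBasis

theorem hkps_condition_implies_variational_general
    {U V : Type*} [NormedAddCommGroup U] [InnerProductSpace ℝ U]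
    [NormedAddCommGroup V]
    (F : U → V) (b : HilbertBasis ℕ ℝ U)
    (q : ℝ) (hq1 : 1 < q) (hq2 : q ≤ 2)
    (w : ℕ → ℝ) (wmin : ℝ) (hwmin : 0 < wmin) (hw : ∀ i, wmin ≤ w i)
    (R : U → ℝ) (hR : ∀ u : U, R u = ∑' i, w i * |⟪b i, u⟫_ℝ| ^ q)
    (udag : U) (hudag : Summable (fun i => w i * |⟪b i, udag⟫_ℝ| ^ q))
    (ξ : U)
    (hξ : ∀ i, ⟪b i, ξ⟫_ℝ = q * w i * |⟪b i, udag⟫_ℝ| ^ (q - 1) * Real.sign ⟪b i, udag⟫_ℝ)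
    (γ₁ γ₂ ρ : ℝ) (hγ₁1 : γ₁ < 1) (hγ₂ : 0 < γ₂) (hρ : R udag < ρ)
    (hhkps : ∀ u : U, Summable (fun i => w i * |⟪b i, u⟫_ℝ| ^ q) → R u < ρ →
      ⟪ξ, udag - u⟫_ℝ ≤ γ₁ * (R u - R udag - ⟪ξ, u - udag⟫_ℝ) + γ₂ * ‖F u - F udag‖) :
    ∃ β₁ > 0, ∃ β₂ > 0, ∀ u : U,
      Summable (fun i => w i * |⟪b i, u⟫_ℝ| ^ q) → R u < ρ →
      β₁ * ‖u - udag‖ ^ 2 - β₂ * ‖F u - F udag‖ ≤ R u - R udag := by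
  have hR_nonneg : 0 ≤ R udag := by
    rw [hR]
    exact tsum_nonneg fun i => mul_nonneg (hwmin.le.trans (hw i)) (by positivity)
  set M := (ρ / wmin) ^ q⁻¹
  have hM : 0 < M := rpow_pos_of_pos (div_pos (by linarith) hwmin) _
  have hcoeff : ∀ u : U, Summable (fun i => w i * |⟪b i, u⟫_ℝ| ^ q) → R u < ρ →
      ∀ i, |⟪b i, u⟫_ℝ| ≤ M := fun u hu hRu =>
    abs_le_rpow_inv_of_tsum_mul_abs_rpow_le (by linarith) hwmin hw hu (hR u ▸ hRu.le)
  have hκ : 0 < q * (q - 1) / 2 * M ^ (q - 2) := by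
    have := sub_pos.2 hq1
    positivity
  refine ⟨(1 - γ₁) * (wmin * (q * (q - 1) / 2 * M ^ (q - 2))),
    mul_pos (sub_pos.2 hγ₁1) (mul_pos hwmin hκ), γ₂, hγ₂, fun u hu hRu => ?_⟩
  have hbregman := b.mul_norm_sub_sq_le_tsum_sub_tsum_sub_inner hq1 hq2 hwmin.le hw hu hudag
    (hcoeff u hu hRu) (hcoeff udag hudag hρ) hξ
  rw [← hR, ← hR] at hbregman
  have hsource := hhkps u hu hRu
  rw [← neg_sub u udag, inner_neg_right] at hsource
  linarith [mul_le_mul_of_nonneg_left hbregman (sub_nonneg.2 hγ₁1.le)]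

theorem hkps_condition_implies_variational
    {U V : Type*} [NormedAddCommGroup U] [InnerProductSpace ℝ U] [CompleteSpace U]
    [NormedAddCommGroup V] [NormedSpace ℝ V]
    (F : U → V) (b : HilbertBasis ℕ ℝ U)
    (q : ℝ) (hq1 : 1 < q) (hq2 : q ≤ 2)
    (w : ℕ → ℝ) (wmin : ℝ) (hwmin : 0 < wmin) (hw : ∀ i, wmin ≤ w i)
    (R : U → ℝ) (hR : ∀ u : U, R u = ∑' i, w i * |⟪b i, u⟫_ℝ| ^ q)
    (udag : U) (hudag : Summable (fun i => w i * |⟪b i, udag⟫_ℝ| ^ q))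
    (ξ : U)
    (hξ : ∀ i, ⟪b i, ξ⟫_ℝ = q * w i * |⟪b i, udag⟫_ℝ| ^ (q - 1) * Real.sign ⟪b i, udag⟫_ℝ)
    (γ₁ γ₂ ρ : ℝ) (hγ₁0 : 0 ≤ γ₁) (hγ₁1 : γ₁ < 1) (hγ₂ : 0 < γ₂) (hρ : R udag < ρ)
    (hhkps : ∀ u : U, Summable (fun i => w i * |⟪b i, u⟫_ℝ| ^ q) → R u < ρ →
      ⟪ξ, udag - u⟫_ℝ ≤ γ₁ * (R u - R udag - ⟪ξ, u - udag⟫_ℝ) + γ₂ * ‖F u - F udag‖) :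
    ∃ β₁ > 0, ∃ β₂ > 0, ∀ u : U,
      Summable (fun i => w i * |⟪b i, u⟫_ℝ| ^ q) → R u < ρ →
      β₁ * ‖u - udag‖ ^ 2 - β₂ * ‖F u - F udag‖ ≤ R u - R udag :=
  hkps_condition_implies_variational_general F b q hq1 hq2 w wmin hwmin hw R hR udag hudag ξ hξ γ₁
    γ₂ ρ hγ₁1 hγ₂ hρ hhkps
end
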